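/- arXiv:cs/0403024 — 9 statements merged into one kernel-verified Lean document; each statement's English description precedes it below -/
import Mathlib

section
/- ∼-Newman's Lemma: Let (A, →) be an abstract reduction system and ∼ an equivalence relation on A such that (1) there are no infinite →-sequences, (2) → is ∼-weakly confluent, and (3) → is ∼-bisimilar. Then every element of A has a normal form that is unique up to ∼ (any two normal forms of the same element are ∼-equivalent). -/
/-- ∼-Newman's Lemma: with no infinite reduction sequences, ∼-weak confluence and
∼-bisimilarity, every element has a normal form, unique up to ∼. -/
theorem sim_newmans_lemma {A : Type*} (r : A → A → Prop) (sim : A → A → Prop)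
    (hequiv : Equivalence sim)
    (hwf : ¬ ∃ f : ℕ → A, ∀ n : ℕ, r (f n) (f (n + 1)))
    (hwc : ∀ a b c : A, r a b → r a c →
      ∃ d₁ d₂ : A, Relation.ReflTransGen r b d₁ ∧ Relation.ReflTransGen r c d₂ ∧ sim d₁ d₂)
    (hbis : ∀ a b c : A, sim a b → r a c → ∃ d : A, r b d ∧ sim c d) :
    ∀ a : A,
      (∃ b : A, Relation.ReflTransGen r a b ∧ ∀ c : A, ¬ r b c) ∧
      (∀ b c : A,
        (Relation.ReflTransGen r a b ∧ ∀ x : A, ¬ r b x) →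
        (Relation.ReflTransGen r a c ∧ ∀ x : A, ¬ r c x) → sim b c) := by
  classical
  -- well-foundedness of the reversed relation
  have wf : WellFounded (fun x y => r y x) := by
    by_contra h
    have key : ∀ x : A, ¬ Acc (fun x y => r y x) x →
        ∃ y, r x y ∧ ¬ Acc (fun x y => r y x) y := by
      intro x hx
      by_contra hy
      push_neg at hy
      exact hx (Acc.intro x fun y hxy => hy y hxy)
    obtain ⟨a, ha⟩ : ∃ a, ¬ Acc (fun x y => r y x) a := by
      by_contra h'
      push_neg at h'
      exact h ⟨h'⟩
    choose g hg1 hg2 using key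
    let f : ℕ → {x : A // ¬ Acc (fun x y => r y x) x} := fun n =>
      Nat.rec ⟨a, ha⟩ (fun _ p => ⟨g p.1 p.2, hg2 p.1 p.2⟩) n
    exact hwf ⟨fun n => (f n).1, fun n => hg1 (f n).1 (f n).2⟩
  -- lifting bisimilarity along reduction sequences
  have simlift : ∀ d₁ e₁ : A, Relation.ReflTransGen r d₁ e₁ → ∀ d₂ : A, sim d₁ d₂ →
      ∃ e₂ : A, Relation.ReflTransGen r d₂ e₂ ∧ sim e₁ e₂ := by
    intro d₁ e₁ hre
    induction hre with
    | refl => exact fun d₂ hs => ⟨d₂, Relation.ReflTransGen.refl, hs⟩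
    | tail hmn hstep ih =>
        intro d₂ hs
        obtain ⟨m₂, hm₂, hsm⟩ := ih d₂ hs
        obtain ⟨e₂, he₂, hse⟩ := hbis _ _ _ hsm hstep
        exact ⟨e₂, hm₂.tail he₂, hse⟩
  -- existence of normal forms
  have exist : ∀ a : A, ∃ b : A, Relation.ReflTransGen r a b ∧ ∀ c : A, ¬ r b c := by
    intro a
    induction a using wf.induction with
    | _ a ih =>
        by_cases h : ∃ y, r a y
        · obtain ⟨y, hy⟩ := h
          obtain ⟨b, hb, hnf⟩ := ih y hy
          exact ⟨b, Relation.ReflTransGen.head hy hb, hnf⟩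
        · push_neg at h
          exact ⟨a, Relation.ReflTransGen.refl, h⟩
  -- uniqueness up to sim
  have uniq : ∀ a b c : A,
      (Relation.ReflTransGen r a b ∧ ∀ x : A, ¬ r b x) →
      (Relation.ReflTransGen r a c ∧ ∀ x : A, ¬ r c x) → sim b c := by
    intro a
    induction a using wf.induction with
    | _ a ih =>
        rintro b c ⟨hab, hbnf⟩ ⟨hac, hcnf⟩
        rcases (Relation.ReflTransGen.cases_head hab) with hb | ⟨b₁, hab₁, hb₁b⟩
        · subst hb
          rcases (Relation.ReflTransGen.cases_head hac) with hc | ⟨c₁, hac₁, _⟩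
          · subst hc; exact hequiv.refl _
          · exact absurd hac₁ (hbnf c₁)
        · rcases (Relation.ReflTransGen.cases_head hac) with hc | ⟨c₁, hac₁, hc₁c⟩
          · subst hc; exact absurd hab₁ (hcnf b₁)
          · obtain ⟨d₁, d₂, hbd₁, hcd₂, hsd⟩ := hwc a b₁ c₁ hab₁ hac₁
            -- normal form of d₁
            obtain ⟨e₁, hd₁e₁, he₁nf⟩ := exist d₁
            -- b and e₁ are both normal forms of b₁
            have hsbe₁ : sim b e₁ :=
              ih b₁ hab₁ b e₁ ⟨hb₁b, hbnf⟩ ⟨hbd₁.trans hd₁e₁, he₁nf⟩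
            -- transport e₁ along sim d₁ d₂
            obtain ⟨e₂, hd₂e₂, hse⟩ := simlift d₁ e₁ hd₁e₁ d₂ hsd
            -- e₂ is a normal form
            have he₂nf : ∀ x, ¬ r e₂ x := by
              intro x hx
              obtain ⟨y, hy, _⟩ := hbis e₂ e₁ x (hequiv.symm hse) hx
              exact he₁nf y hy
            -- e₂ and c are both normal forms of c₁
            have hse₂c : sim e₂ c :=
              hequiv.symm (ih c₁ hac₁ c e₂ ⟨hc₁c, hcnf⟩ ⟨hcd₂.trans hd₂e₂, he₂nf⟩)
            exact hequiv.trans hsbe₁ (hequiv.trans hse hse₂c)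
  exact fun a => ⟨exist a, uniq a⟩
end

section
/- Normal Form Lemma: Let (A, →₁) and (A, →₂) be abstract reduction systems and ∼ an equivalence relation on A such that (A, →₁ ∪ →₂) satisfies the ∼-unique normal form property and →₁ left commutes with →₂. Then whenever a →₂* b and a →₂* c for →₂-normal forms b and c, there exist (→₁ ∪ →₂)-normal forms d₁, d₂ with b →₁* d₁, c →₁* d₂ and d₁ ∼ d₂. -/
/-! Left commutation means an →₂-step after →₁-steps can be moved in front of them, so →₁
cannot create →₂-redexes: from a →₂-normal form every (→₁ ∪ →₂)-reduction uses →₁ only. Hence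
the (→₁ ∪ →₂)-normal forms of b and c are reached by →₁ alone, and they are ∼-equivalent
because both are normal forms of a. -/

section

variable {A : Type*} {r₁ r₂ : A → A → Prop}

theorem not_rel_of_reflTransGen_of_not_rel (hlc : ∀ a b c : A, r₁ a b → r₂ b c → ∃ d, r₂ a d)
    {b x : A} (hb : ∀ y, ¬ r₂ b y) (hbx : Relation.ReflTransGen r₁ b x) : ∀ y, ¬ r₂ x y := by
  induction hbx with
  | refl => exact hb
  | tail _ hstep ih =>
    intro y hy
    obtain ⟨d, hd⟩ := hlc _ _ _ hstep hy
    exact ih d hd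

theorem reflTransGen_left_of_reflTransGen_or (hlc : ∀ a b c : A, r₁ a b → r₂ b c → ∃ d, r₂ a d)
    {b d : A} (hb : ∀ y, ¬ r₂ b y) (hbd : Relation.ReflTransGen (fun x y => r₁ x y ∨ r₂ x y) b d) :
    Relation.ReflTransGen r₁ b d := by
  induction hbd with
  | refl => exact .refl
  | tail _ hstep ih =>
    rcases hstep with h₁ | h₂
    · exact ih.tail h₁
    · exact absurd h₂ (not_rel_of_reflTransGen_of_not_rel hlc hb ih _)

end

theorem normal_form_lemma_general {A : Type*} (r₁ r₂ : A → A → Prop) (sim : A → A → Prop)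
    (hun : ∀ a : A,
      (∃ b : A, Relation.ReflTransGen (fun x y => r₁ x y ∨ r₂ x y) a b ∧
        ∀ c : A, ¬ (r₁ b c ∨ r₂ b c)) ∧
      (∀ b c : A,
        (Relation.ReflTransGen (fun x y => r₁ x y ∨ r₂ x y) a b ∧ ∀ x : A, ¬ (r₁ b x ∨ r₂ b x)) →
        (Relation.ReflTransGen (fun x y => r₁ x y ∨ r₂ x y) a c ∧ ∀ x : A, ¬ (r₁ c x ∨ r₂ c x)) →
        sim b c))
    (hlc : ∀ a b c : A, r₁ a b → r₂ b c → ∃ d : A, r₂ a d ∧ Relation.ReflTransGen r₁ d c) :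
    ∀ a b c : A,
      Relation.ReflTransGen r₂ a b → Relation.ReflTransGen r₂ a c →
      (∀ x : A, ¬ r₂ b x) → (∀ x : A, ¬ r₂ c x) →
      ∃ d₁ d₂ : A,
        Relation.ReflTransGen r₁ b d₁ ∧ Relation.ReflTransGen r₁ c d₂ ∧
        (∀ x : A, ¬ (r₁ d₁ x ∨ r₂ d₁ x)) ∧ (∀ x : A, ¬ (r₁ d₂ x ∨ r₂ d₂ x)) ∧
        sim d₁ d₂ := by
  intro a b c hab hac hb hc
  have hlc' : ∀ a b c : A, r₁ a b → r₂ b c → ∃ d, r₂ a d := fun a b c h₁ h₂ =>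
    (hlc a b c h₁ h₂).imp fun _ => And.left
  have hunion : ∀ {x y}, Relation.ReflTransGen r₂ x y →
      Relation.ReflTransGen (fun x y => r₁ x y ∨ r₂ x y) x y :=
    Relation.ReflTransGen.mono (fun _ _ => Or.inr) _ _
  obtain ⟨d₁, hbd₁, hd₁⟩ := (hun b).1
  obtain ⟨d₂, hcd₂, hd₂⟩ := (hun c).1
  exact ⟨d₁, d₂, reflTransGen_left_of_reflTransGen_or hlc' hb hbd₁,
    reflTransGen_left_of_reflTransGen_or hlc' hc hcd₂, hd₁, hd₂,
    (hun a).2 d₁ d₂ ⟨(hunion hab).trans hbd₁, hd₁⟩ ⟨(hunion hac).trans hcd₂, hd₂⟩⟩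

/-- Normal Form Lemma: if →₁ ∪ →₂ has the ∼-unique normal form property and →₁ left
commutes with →₂, then any two →₂-normal forms of an element reduce by →₁ alone to
∼-equivalent (→₁ ∪ →₂)-normal forms. -/
theorem normal_form_lemma {A : Type*} (r₁ r₂ : A → A → Prop) (sim : A → A → Prop)
    (hequiv : Equivalence sim)
    (hun : ∀ a : A,
      (∃ b : A, Relation.ReflTransGen (fun x y => r₁ x y ∨ r₂ x y) a b ∧
        ∀ c : A, ¬ (r₁ b c ∨ r₂ b c)) ∧
      (∀ b c : A,
        (Relation.ReflTransGen (fun x y => r₁ x y ∨ r₂ x y) a b ∧ ∀ x : A, ¬ (r₁ b x ∨ r₂ b x)) →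
        (Relation.ReflTransGen (fun x y => r₁ x y ∨ r₂ x y) a c ∧ ∀ x : A, ¬ (r₁ c x ∨ r₂ c x)) →
        sim b c))
    (hlc : ∀ a b c : A, r₁ a b → r₂ b c → ∃ d : A, r₂ a d ∧ Relation.ReflTransGen r₁ d c) :
    ∀ a b c : A,
      Relation.ReflTransGen r₂ a b → Relation.ReflTransGen r₂ a c →
      (∀ x : A, ¬ r₂ b x) → (∀ x : A, ¬ r₂ c x) →
      ∃ d₁ d₂ : A,
        Relation.ReflTransGen r₁ b d₁ ∧ Relation.ReflTransGen r₁ c d₂ ∧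
        (∀ x : A, ¬ (r₁ d₁ x ∨ r₂ d₁ x)) ∧ (∀ x : A, ¬ (r₁ d₂ x ∨ r₂ d₂ x)) ∧
        sim d₁ d₂ :=
  normal_form_lemma_general r₁ r₂ sim hun hlc
end

section
/- Equivalence Lemma for pure dominance: If a dominance relation R on a finite strategic game is a strict partial order (irreflexive and transitive on each strategy set), then the reduction relations →_R and ⇒_R on restrictions of the game coincide; in particular, if in a restriction G every strategy in S_i \ S'_i is R-dominated in G by some strategy in S_i, then every strategy in S_i \ S'_i is R-dominated in G by some strategy in S'_i. -/
lemma core_dom {α : Type*} [Fintype α] (R : α → α → Prop)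
    (irr : ∀ a, ¬ R a a) (tr : ∀ a b c, R a b → R b c → R a c)
    (T T' : Finset α)
    (h : ∀ s ∈ T, s ∉ T' → ∃ s' ∈ T, R s s') :
    ∀ s ∈ T, s ∉ T' → ∃ s' ∈ T', R s s' := by
  classical
  intro s hsT hsT'
  have wf : WellFounded (fun a b => R b a) := by
    have : IsTrans α (fun a b => R b a) := ⟨fun a b c h1 h2 => tr c b a h2 h1⟩
    have : IsIrrefl α (fun a b => R b a) := ⟨fun a => irr a⟩
    exact Finite.wellFounded_of_trans_of_irrefl _
  obtain ⟨s', hs'T, hRss'⟩ := h s hsT hsT'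
  have hne : (T.filter (fun x => R s x)).Nonempty := ⟨s', by simp [hs'T, hRss']⟩
  obtain ⟨m, hm, hmin⟩ := wf.has_min (T.filter (fun x => R s x) : Set α) hne
  simp only [Finset.coe_filter, Set.mem_setOf_eq] at hm
  obtain ⟨hmT, hRsm⟩ := hm
  by_cases hmT' : m ∈ T'
  · exact ⟨m, hmT', hRsm⟩
  · obtain ⟨u, huT, hRmu⟩ := h m hmT hmT'
    exact absurd hRmu (hmin u (by simp [huT, tr s m u hRsm hRmu]))

/-- Equivalence Lemma: for a dominance relation `R` (assigning to each restriction,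
given by its tuple of strategy sets, a relation on each player's strategies) that is a
strict partial order, the reduction relations `→_R` (dominator anywhere in the game)
and `⇒_R` (dominator among the surviving strategies) coincide. -/
theorem equivalence_lemma_pure {n : ℕ} {S : Fin n → Type*} [∀ i, Fintype (S i)]
    (R : (∀ i, Finset (S i)) → ∀ i, S i → S i → Prop)
    (hspo : ∀ (T : ∀ i, Finset (S i)) (i : Fin n),
      (∀ s : S i, ¬ R T i s s) ∧
      (∀ s t u : S i, R T i s t → R T i t u → R T i s u)) :
    ∀ T T' : ∀ i, Finset (S i),
      (T ≠ T' ∧ (∀ i, T' i ⊆ T i) ∧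
        (∀ i, ∀ s ∈ T i, s ∉ T' i → ∃ s' ∈ T i, R T i s s')) ↔
      (T ≠ T' ∧ (∀ i, T' i ⊆ T i) ∧
        (∀ i, ∀ s ∈ T i, s ∉ T' i → ∃ s' ∈ T' i, R T i s s')) := by
  intro T T'
  constructor
  · rintro ⟨hne, hsub, hdom⟩
    exact ⟨hne, hsub, fun i =>
      core_dom (R T i) (hspo T i).1 (hspo T i).2 (T i) (T' i) (hdom i)⟩
  · rintro ⟨hne, hsub, hdom⟩
    refine ⟨hne, hsub, fun i s hs hs' => ?_⟩
    obtain ⟨u, hu, hRu⟩ := hdom i s hs hs'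
    exact ⟨u, hsub i hu, hRu⟩
end

section
/- One-at-a-time Elimination: For a dominance relation R that is hereditary, the transitive closure of the one-strategy-at-a-time reduction ⇒_{1,R} equals the transitive closure of ⇒_R; i.e., whenever G ⇒_R G', there is a chain of single-strategy eliminations G ⇒_{1,R} G₁ ⇒_{1,R} … ⇒_{1,R} G'. -/
/-!
Given `T ⇒_R T'`, delete a single strategy `s ∈ T i \ T' i`. This step is a `⇒_{1,R}` step,
since `s` is dominated by an element of `T'`, which survives the deletion. What remains of the
original step is again a `⇒_R` step by heredity, as the dominator and every strategy still to
be removed lie in the smaller game. Since games strictly decrease, well-founded induction on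
the starting game finishes the argument.
-/

open Function Relation

section

variable {ι : Type*} {S : ι → Type*}

/-- Games are restrictions of one fixed game, encoded by their strategy sets `T i`, and
`R T i s s'` says that `s` is `R`-dominated by `s'` in `T`. -/
def Hereditary (R : (∀ i, Finset (S i)) → ∀ i, S i → S i → Prop) : Prop :=
  ∀ T T' : ∀ i, Finset (S i), (∀ i, T' i ⊆ T i) →
    ∀ (i : ι) (s s' : S i), s ∈ T' i → s' ∈ T' i → R T i s s' → R T' i s s'

/-- `T ⇒_R T'`. -/
def Reduction (R : (∀ i, Finset (S i)) → ∀ i, S i → S i → Prop) (T T' : ∀ i, Finset (S i)) :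
    Prop :=
  T ≠ T' ∧ (∀ i, T' i ⊆ T i) ∧ (∀ i, ∀ s ∈ T i, s ∉ T' i → ∃ s' ∈ T' i, R T i s s')

/-- `T ⇒_{1,R} T'`. -/
def SingleReduction [Fintype ι] [∀ i, DecidableEq (S i)]
    (R : (∀ i, Finset (S i)) → ∀ i, S i → S i → Prop) (T T' : ∀ i, Finset (S i)) : Prop :=
  Reduction R T T' ∧ (∑ i, (T i \ T' i).card) = 1

variable {R : (∀ i, Finset (S i)) → ∀ i, S i → S i → Prop} {T T' : ∀ i, Finset (S i)}

lemma Reduction.exists_mem_not_mem (h : Reduction R T T') : ∃ i, ∃ s ∈ T i, s ∉ T' i := by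
  by_contra! hsub
  exact h.1 (funext fun i => (h.2.1 i).antisymm' (hsub i))

variable [DecidableEq ι] [∀ i, DecidableEq (S i)]

lemma update_erase_le (i : ι) (s : S i) : update T i ((T i).erase s) ≤ T := fun j => by
  rcases eq_or_ne j i with rfl | hj
  · simpa using Finset.erase_subset s (T j)
  · simp [update_of_ne hj]

lemma update_erase_lt {i : ι} {s : S i} (hs : s ∈ T i) : update T i ((T i).erase s) < T :=
  (update_erase_le i s).lt_of_ne fun h =>
    Finset.erase_eq_self.1 (by simpa using congrFun h i) hs

lemma le_update_erase (hle : T' ≤ T) {i : ι} {s : S i} (hs' : s ∉ T' i) :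
    T' ≤ update T i ((T i).erase s) := fun j t ht => by
  rcases eq_or_ne j i with rfl | hj
  · simpa [ne_of_mem_of_not_mem ht hs'] using hle j ht
  · simpa [update_of_ne hj] using hle j ht

lemma Reduction.update_erase (hR : Hereditary R) (h : Reduction R T T') {i : ι} {s : S i}
    (hs' : s ∉ T' i) (hne : update T i ((T i).erase s) ≠ T') :
    Reduction R (update T i ((T i).erase s)) T' := by
  have hUT := update_erase_le (T := T) i s
  have hT'U := le_update_erase h.2.1 hs'
  refine ⟨hne, hT'U, fun j t ht ht' => ?_⟩
  obtain ⟨t', ht'T', hdom⟩ := h.2.2 j t (hUT j ht) ht'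
  exact ⟨t', ht'T', hR T _ hUT j t t' ht (hT'U j ht'T') hdom⟩

variable [Fintype ι]

lemma sum_card_sdiff_update_erase {i : ι} {s : S i} (hs : s ∈ T i) :
    ∑ j, (T j \ update T i ((T i).erase s) j).card = 1 := by
  rw [Finset.sum_eq_single i (fun j _ hj => by simp [update_of_ne hj]) (by simp)]
  simp [Finset.sdiff_erase_self hs]

lemma Reduction.singleReduction_update_erase (h : Reduction R T T') {i : ι} {s : S i}
    (hs : s ∈ T i) (hs' : s ∉ T' i) : SingleReduction R T (update T i ((T i).erase s)) := by
  refine ⟨⟨(update_erase_lt hs).ne', update_erase_le i s, fun j t ht ht' => ?_⟩,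
    sum_card_sdiff_update_erase hs⟩
  rcases eq_or_ne j i with rfl | hj
  · obtain rfl : t = s := by simpa [ht] using ht'
    obtain ⟨t', ht'T', hR⟩ := h.2.2 j t ht hs'
    exact ⟨t', le_update_erase h.2.1 hs' j ht'T', hR⟩
  · exact absurd ht (by simpa [update_of_ne hj] using ht')

theorem Reduction.transGen_singleReduction (hR : Hereditary R) (h : Reduction R T T') :
    TransGen (SingleReduction R) T T' := by
  induction T using WellFoundedLT.induction with
  | _ T ih =>
    obtain ⟨i, s, hs, hs'⟩ := h.exists_mem_not_mem
    have hstep := h.singleReduction_update_erase hs hs'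
    by_cases hne : update T i ((T i).erase s) = T'
    · exact .single (hne ▸ hstep)
    · exact .head hstep (ih _ (update_erase_lt hs) (h.update_erase hR hs' hne))

theorem transGen_singleReduction_eq (hR : Hereditary R) :
    TransGen (SingleReduction R) = TransGen (Reduction R) :=
  le_antisymm (TransGen.mono fun _ _ h => h.1)
    (TransGen.closed fun _ _ h => h.transGen_singleReduction hR)

end

theorem one_at_a_time_elimination_general {n : ℕ} {S : Fin n → Type*}
    [∀ i, DecidableEq (S i)]
    (R : (∀ i, Finset (S i)) → ∀ i, S i → S i → Prop)
    (hher : ∀ T T' : ∀ i, Finset (S i), (∀ i, T' i ⊆ T i) →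
      ∀ (i : Fin n) (s s' : S i), s ∈ T' i → s' ∈ T' i → R T i s s' → R T' i s s') :
    Relation.TransGen (fun T T' : ∀ i, Finset (S i) =>
        (T ≠ T' ∧ (∀ i, T' i ⊆ T i) ∧
          (∀ i, ∀ s ∈ T i, s ∉ T' i → ∃ s' ∈ T' i, R T i s s')) ∧
        (∑ i, (T i \ T' i).card) = 1) =
    Relation.TransGen (fun T T' : ∀ i, Finset (S i) =>
        T ≠ T' ∧ (∀ i, T' i ⊆ T i) ∧
          (∀ i, ∀ s ∈ T i, s ∉ T' i → ∃ s' ∈ T' i, R T i s s')) :=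
  transGen_singleReduction_eq hher

/-- One-at-a-time Elimination: for a hereditary dominance relation `R`, the transitive
closure of the single-strategy elimination relation `⇒_{1,R}` equals the transitive
closure of `⇒_R`. -/
theorem one_at_a_time_elimination {n : ℕ} {S : Fin n → Type*}
    [∀ i, Fintype (S i)] [∀ i, DecidableEq (S i)]
    (R : (∀ i, Finset (S i)) → ∀ i, S i → S i → Prop)
    (hher : ∀ T T' : ∀ i, Finset (S i), (∀ i, T' i ⊆ T i) →
      ∀ (i : Fin n) (s s' : S i), s ∈ T' i → s' ∈ T' i → R T i s s' → R T' i s s') :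
    Relation.TransGen (fun T T' : ∀ i, Finset (S i) =>
        (T ≠ T' ∧ (∀ i, T' i ⊆ T i) ∧
          (∀ i, ∀ s ∈ T i, s ∉ T' i → ∃ s' ∈ T' i, R T i s s')) ∧
        (∑ i, (T i \ T' i).card) = 1) =
    Relation.TransGen (fun T T' : ∀ i, Finset (S i) =>
        T ≠ T' ∧ (∀ i, T' i ⊆ T i) ∧
          (∀ i, ∀ s ∈ T i, s ∉ T' i → ∃ s' ∈ T' i, R T i s s')) :=
  one_at_a_time_elimination_general R hher
end

section
/- Weak Confluence Lemma for hereditary strict partial orders: If a dominance relation R is hereditary and a strict partial order, then the reduction relation ⇒_R on the set of all restrictions of a finite game H is weakly confluent; in fact, G ⇒_R G' and G ⇒_R G'' imply G' ⇒_R^ε G' ∩ G'' and G'' ⇒_R^ε G' ∩ G''. -/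
/-- Weak Confluence Lemma: for a hereditary dominance relation that is a strict partial
order, the reduction relation `⇒_R` on restrictions of a finite game is weakly
confluent; in fact `G ⇒_R G'` and `G ⇒_R G''` imply `G' ⇒_R^ε G' ∩ G''` and
`G'' ⇒_R^ε G' ∩ G''`. -/
theorem weak_confluence_hereditary_spo {n : ℕ} {S : Fin n → Type*}
    [∀ i, Fintype (S i)] [∀ i, DecidableEq (S i)]
    (R : (∀ i, Finset (S i)) → ∀ i, S i → S i → Prop)
    (hher : ∀ T T' : ∀ i, Finset (S i), (∀ i, T' i ⊆ T i) →
      ∀ (i : Fin n) (s s' : S i), s ∈ T' i → s' ∈ T' i → R T i s s' → R T' i s s')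
    (hspo : ∀ (T : ∀ i, Finset (S i)) (i : Fin n),
      (∀ s : S i, ¬ R T i s s) ∧
      (∀ s t u : S i, R T i s t → R T i t u → R T i s u)) :
    (∀ T T' T'' : ∀ i, Finset (S i),
      (T ≠ T' ∧ (∀ i, T' i ⊆ T i) ∧
        (∀ i, ∀ s ∈ T i, s ∉ T' i → ∃ s' ∈ T' i, R T i s s')) →
      (T ≠ T'' ∧ (∀ i, T'' i ⊆ T i) ∧
        (∀ i, ∀ s ∈ T i, s ∉ T'' i → ∃ s' ∈ T'' i, R T i s s')) →
      ∃ D : ∀ i, Finset (S i),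
        Relation.ReflTransGen (fun A B : ∀ i, Finset (S i) =>
          A ≠ B ∧ (∀ i, B i ⊆ A i) ∧
            (∀ i, ∀ s ∈ A i, s ∉ B i → ∃ s' ∈ B i, R A i s s')) T' D ∧
        Relation.ReflTransGen (fun A B : ∀ i, Finset (S i) =>
          A ≠ B ∧ (∀ i, B i ⊆ A i) ∧
            (∀ i, ∀ s ∈ A i, s ∉ B i → ∃ s' ∈ B i, R A i s s')) T'' D) ∧
    (∀ T T' T'' : ∀ i, Finset (S i),
      (T ≠ T' ∧ (∀ i, T' i ⊆ T i) ∧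
        (∀ i, ∀ s ∈ T i, s ∉ T' i → ∃ s' ∈ T' i, R T i s s')) →
      (T ≠ T'' ∧ (∀ i, T'' i ⊆ T i) ∧
        (∀ i, ∀ s ∈ T i, s ∉ T'' i → ∃ s' ∈ T'' i, R T i s s')) →
      (T' = (fun i => T' i ∩ T'' i) ∨
        (T' ≠ (fun i => T' i ∩ T'' i) ∧ (∀ i, T' i ∩ T'' i ⊆ T' i) ∧
          (∀ i, ∀ s ∈ T' i, s ∉ T' i ∩ T'' i → ∃ s' ∈ T' i ∩ T'' i, R T' i s s'))) ∧
      (T'' = (fun i => T' i ∩ T'' i) ∨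
        (T'' ≠ (fun i => T' i ∩ T'' i) ∧ (∀ i, T' i ∩ T'' i ⊆ T'' i) ∧
          (∀ i, ∀ s ∈ T'' i, s ∉ T' i ∩ T'' i → ∃ s' ∈ T' i ∩ T'' i, R T'' i s s')))) := by
  -- Key climbing lemma: every strategy of `T` is weakly R-dominated (in `T`) by
  -- a strategy surviving in both reducts.
  have key : ∀ (T A B : ∀ i, Finset (S i)),
      (∀ i, A i ⊆ T i) → (∀ i, ∀ s ∈ T i, s ∉ A i → ∃ s' ∈ A i, R T i s s') →
      (∀ i, B i ⊆ T i) → (∀ i, ∀ s ∈ T i, s ∉ B i → ∃ s' ∈ B i, R T i s s') →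
      ∀ i, ∀ s ∈ T i, ∃ s', s' ∈ A i ∩ B i ∧ (s' = s ∨ R T i s s') := by
    intro T A B hA hdA hB hdB i
    have hirr := (hspo T i).1
    have htr := (hspo T i).2
    have hwf : WellFounded (fun a b : S i => R T i b a) := by
      have : IsIrrefl (S i) (fun a b : S i => R T i b a) := ⟨fun a => hirr a⟩
      have : IsTrans (S i) (fun a b : S i => R T i b a) :=
        ⟨fun a b c hab hbc => htr c b a hbc hab⟩
      exact Finite.wellFounded_of_trans_of_irrefl _
    intro s
    induction s using hwf.induction with
    | _ s ih =>
      intro hs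
      by_cases h1 : s ∈ A i
      · by_cases h2 : s ∈ B i
        · exact ⟨s, Finset.mem_inter.2 ⟨h1, h2⟩, Or.inl rfl⟩
        · obtain ⟨t, htB, hRt⟩ := hdB i s hs h2
          obtain ⟨s', hs', hc⟩ := ih t hRt (hB i htB)
          refine ⟨s', hs', Or.inr ?_⟩
          rcases hc with rfl | h
          · exact hRt
          · exact htr s t s' hRt h
      · obtain ⟨t, htA, hRt⟩ := hdA i s hs h1
        obtain ⟨s', hs', hc⟩ := ih t hRt (hA i htA)
        refine ⟨s', hs', Or.inr ?_⟩
        rcases hc with rfl | h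
        · exact hRt
        · exact htr s t s' hRt h
  -- Half step: `A ⇒_R^ε A ∩ B`.
  have half : ∀ (T A B : ∀ i, Finset (S i)),
      (T ≠ A ∧ (∀ i, A i ⊆ T i) ∧
        (∀ i, ∀ s ∈ T i, s ∉ A i → ∃ s' ∈ A i, R T i s s')) →
      (T ≠ B ∧ (∀ i, B i ⊆ T i) ∧
        (∀ i, ∀ s ∈ T i, s ∉ B i → ∃ s' ∈ B i, R T i s s')) →
      (A = (fun i => A i ∩ B i) ∨
        (A ≠ (fun i => A i ∩ B i) ∧ (∀ i, A i ∩ B i ⊆ A i) ∧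
          (∀ i, ∀ s ∈ A i, s ∉ A i ∩ B i → ∃ s' ∈ A i ∩ B i, R A i s s'))) := by
    intro T A B ⟨_, hA, hdA⟩ ⟨_, hB, hdB⟩
    by_cases heq : A = (fun i => A i ∩ B i)
    · exact Or.inl heq
    · refine Or.inr ⟨heq, fun i => Finset.inter_subset_left, ?_⟩
      intro i s hsA hsI
      obtain ⟨s', hs'I, hc⟩ := key T A B hA hdA hB hdB i s (hA i hsA)
      rcases hc with rfl | h
      · exact absurd hs'I hsI
      · exact ⟨s', hs'I, hher T A hA i s s' hsA (Finset.inter_subset_left hs'I) h⟩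
  have main : ∀ T T' T'' : ∀ i, Finset (S i),
      (T ≠ T' ∧ (∀ i, T' i ⊆ T i) ∧
        (∀ i, ∀ s ∈ T i, s ∉ T' i → ∃ s' ∈ T' i, R T i s s')) →
      (T ≠ T'' ∧ (∀ i, T'' i ⊆ T i) ∧
        (∀ i, ∀ s ∈ T i, s ∉ T'' i → ∃ s' ∈ T'' i, R T i s s')) →
      (T' = (fun i => T' i ∩ T'' i) ∨
        (T' ≠ (fun i => T' i ∩ T'' i) ∧ (∀ i, T' i ∩ T'' i ⊆ T' i) ∧
          (∀ i, ∀ s ∈ T' i, s ∉ T' i ∩ T'' i → ∃ s' ∈ T' i ∩ T'' i, R T' i s s'))) ∧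
      (T'' = (fun i => T' i ∩ T'' i) ∨
        (T'' ≠ (fun i => T' i ∩ T'' i) ∧ (∀ i, T' i ∩ T'' i ⊆ T'' i) ∧
          (∀ i, ∀ s ∈ T'' i, s ∉ T' i ∩ T'' i → ∃ s' ∈ T' i ∩ T'' i, R T'' i s s'))) := by
    intro T T' T'' h1 h2
    constructor
    · exact half T T' T'' h1 h2
    · have := half T T'' T' h2 h1
      have hcomm : (fun i => T'' i ∩ T' i) = (fun i => T' i ∩ T'' i) :=
        funext fun i => Finset.inter_comm _ _
      rcases this with heq | ⟨hne, _, hd⟩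
      · left; exact heq.trans hcomm
      · right
        refine ⟨by rwa [hcomm] at hne, fun i => Finset.inter_subset_right, ?_⟩
        intro i s hs hns
        have hns' : s ∉ T'' i ∩ T' i := by rwa [Finset.inter_comm]
        obtain ⟨s', hs', hR⟩ := hd i s hs hns'
        exact ⟨s', by rwa [Finset.inter_comm] at hs', hR⟩
  refine ⟨?_, main⟩
  intro T T' T'' h1 h2
  obtain ⟨c1, c2⟩ := main T T' T'' h1 h2
  refine ⟨fun i => T' i ∩ T'' i, ?_, ?_⟩
  · rcases c1 with heq | hstep
    · rw [← heq]
    · exact Relation.ReflTransGen.single hstep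
  · rcases c2 with heq | hstep
    · rw [← heq]
    · exact Relation.ReflTransGen.single hstep
end

section
/- Elimination Theorem: For a dominance relation R that is hereditary and a strict partial order, the reduction relation ⇒_R on the set of all restrictions of a finite game has the unique normal form property (iterated elimination of R-dominated strategies is order independent). -/
open Relation Finset

section ElimAux

variable {n : ℕ} {S : Fin n → Type*} [∀ i, Fintype (S i)]
variable (R : (∀ i, Finset (S i)) → ∀ i, S i → S i → Prop)

/-- One elimination step. -/
def ETStep (A B : ∀ i, Finset (S i)) : Prop :=
  A ≠ B ∧ (∀ i, B i ⊆ A i) ∧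
    (∀ i, ∀ s ∈ A i, s ∉ B i → ∃ s' ∈ B i, R A i s s')

/-- Size measure. -/
def ETM (T : ∀ i, Finset (S i)) : ℕ := ∑ i, (T i).card

variable {R}

lemma ETStep.lt {A B : ∀ i, Finset (S i)} (h : ETStep R A B) : ETM B < ETM A := by
  obtain ⟨hne, hsub, -⟩ := h
  have hex : ∃ i, B i ≠ A i := by
    by_contra hc
    push_neg at hc
    exact hne (funext fun i => (hc i).symm)
  obtain ⟨i, hi⟩ := hex
  refine Finset.sum_lt_sum (fun j _ => Finset.card_le_card (hsub j)) ⟨i, Finset.mem_univ i, ?_⟩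
  exact Finset.card_lt_card ((hsub i).ssubset_of_ne hi)

/-- If a strategy is dominated in `G`, it is dominated (in `G`) by something that
survives both one-step eliminations. -/
lemma ET_find
    (hspo : ∀ (T : ∀ i, Finset (S i)) (i : Fin n),
      (∀ s : S i, ¬ R T i s s) ∧
      (∀ s t u : S i, R T i s t → R T i t u → R T i s u))
    {G G1 G2 : ∀ i, Finset (S i)}
    (hs1 : ∀ i, G1 i ⊆ G i)
    (hd1 : ∀ i, ∀ s ∈ G i, s ∉ G1 i → ∃ s' ∈ G1 i, R G i s s')
    (hs2 : ∀ i, G2 i ⊆ G i)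
    (hd2 : ∀ i, ∀ s ∈ G i, s ∉ G2 i → ∃ s' ∈ G2 i, R G i s s')
    (i : Fin n) {s t : S i} (ht : t ∈ G i) (hst : R G i s t) :
    ∃ u, u ∈ G1 i ∧ u ∈ G2 i ∧ R G i s u := by
  classical
  suffices H : ∀ k, ∀ t : S i,
      (Finset.univ.filter (fun v => R G i t v)).card < k → t ∈ G i → R G i s t →
      ∃ u, u ∈ G1 i ∧ u ∈ G2 i ∧ R G i s u by
    exact H _ t (Nat.lt_succ_self _) ht hst
  intro k
  induction k with
  | zero => intro t hc; omega
  | succ k ih =>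
    intro t hc ht hst
    have step : ∀ u : S i, R G i t u →
        (Finset.univ.filter (fun v => R G i u v)).card < k := by
      intro u htu
      have hss : (Finset.univ.filter (fun v => R G i u v)) ⊂
          (Finset.univ.filter (fun v => R G i t v)) := by
        refine (Finset.ssubset_iff_of_subset ?_).2 ⟨u, ?_, ?_⟩
        · intro v hv
          simp only [Finset.mem_filter, Finset.mem_univ, true_and] at hv ⊢
          exact (hspo G i).2 _ _ _ htu hv
        · simp only [Finset.mem_filter, Finset.mem_univ, true_and]; exact htu
        · simp only [Finset.mem_filter, Finset.mem_univ, true_and]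
          exact (hspo G i).1 u
      have := Finset.card_lt_card hss
      omega
    by_cases ht1 : t ∈ G1 i
    · by_cases ht2 : t ∈ G2 i
      · exact ⟨t, ht1, ht2, hst⟩
      · obtain ⟨u, hu2, htu⟩ := hd2 i t ht ht2
        exact ih u (step u htu) (hs2 i hu2) ((hspo G i).2 _ _ _ hst htu)
    · obtain ⟨u, hu1, htu⟩ := hd1 i t ht ht1
      exact ih u (step u htu) (hs1 i hu1) ((hspo G i).2 _ _ _ hst htu)

/-- Half of the diamond: `G1` reduces (in at most one step) to the intersection. -/
lemma ET_half [∀ i, DecidableEq (S i)]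
    (hher : ∀ T T' : ∀ i, Finset (S i), (∀ i, T' i ⊆ T i) →
      ∀ (i : Fin n) (s s' : S i), s ∈ T' i → s' ∈ T' i → R T i s s' → R T' i s s')
    (hspo : ∀ (T : ∀ i, Finset (S i)) (i : Fin n),
      (∀ s : S i, ¬ R T i s s) ∧
      (∀ s t u : S i, R T i s t → R T i t u → R T i s u))
    {G G1 G2 : ∀ i, Finset (S i)} (h1 : ETStep R G G1) (h2 : ETStep R G G2) :
    G1 = (fun i => G1 i ∩ G2 i) ∨ ETStep R G1 (fun i => G1 i ∩ G2 i) := by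
  by_cases heq : G1 = (fun i => G1 i ∩ G2 i)
  · exact Or.inl heq
  refine Or.inr ⟨heq, fun i => Finset.inter_subset_left, ?_⟩
  intro i s hs hns
  have hs2 : s ∉ G2 i := fun h => hns (Finset.mem_inter.2 ⟨hs, h⟩)
  have hsG : s ∈ G i := h1.2.1 i hs
  obtain ⟨t, ht2, hst⟩ := h2.2.2 i s hsG hs2
  obtain ⟨u, hu1, hu2, hsu⟩ :=
    ET_find hspo h1.2.1 h1.2.2 h2.2.1 h2.2.2 i (h2.2.1 i ht2) hst
  exact ⟨u, Finset.mem_inter.2 ⟨hu1, hu2⟩,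
    hher G G1 h1.2.1 i s u hs hu1 hsu⟩

/-- If `T` reduces to a normal form `N` and `T ⇒ T'`, then `T'` also reduces to `N`. -/
lemma ET_toNF [∀ i, DecidableEq (S i)]
    (hher : ∀ T T' : ∀ i, Finset (S i), (∀ i, T' i ⊆ T i) →
      ∀ (i : Fin n) (s s' : S i), s ∈ T' i → s' ∈ T' i → R T i s s' → R T' i s s')
    (hspo : ∀ (T : ∀ i, Finset (S i)) (i : Fin n),
      (∀ s : S i, ¬ R T i s s) ∧
      (∀ s t u : S i, R T i s t → R T i t u → R T i s u))
    {N : ∀ i, Finset (S i)} (hN : ∀ U, ¬ ETStep R N U) :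
    ∀ m (T : ∀ i, Finset (S i)), ETM T ≤ m →
      ReflTransGen (ETStep R) T N → ∀ T', ETStep R T T' →
      ReflTransGen (ETStep R) T' N := by
  intro m
  induction m with
  | zero =>
    intro T hm hTN T' hTT'
    have := hTT'.lt
    omega
  | succ m ih =>
    intro T hm hTN T' hTT'
    rcases hTN.cases_head with rfl | ⟨U, hTU, hUN⟩
    · exact absurd hTT' (hN T')
    · have h1 := ET_half hher hspo hTU hTT'
      -- V := intersection of U and T'
      set V : ∀ i, Finset (S i) := fun i => U i ∩ T' i with hV
      have hVN : ReflTransGen (ETStep R) V N := by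
        rcases h1 with heq | hstep
        · rw [← heq]; exact hUN
        · exact ih U (by have := hTU.lt; omega) hUN V hstep
      have h2 := ET_half hher hspo hTT' hTU
      have hV' : (fun i => T' i ∩ U i) = V := by
        funext i; exact Finset.inter_comm _ _
      rw [hV'] at h2
      rcases h2 with heq | hstep
      · rw [heq]; exact hVN
      · exact ReflTransGen.head hstep hVN

end ElimAux

/-- Elimination Theorem: for a hereditary dominance relation that is a strict partial
order, iterated elimination of dominated strategies (the `⇒_R` reduction on
restrictions of a finite game) has the unique normal form property. -/
theorem elimination_theorem {n : ℕ} {S : Fin n → Type*} [∀ i, Fintype (S i)]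
    (R : (∀ i, Finset (S i)) → ∀ i, S i → S i → Prop)
    (hher : ∀ T T' : ∀ i, Finset (S i), (∀ i, T' i ⊆ T i) →
      ∀ (i : Fin n) (s s' : S i), s ∈ T' i → s' ∈ T' i → R T i s s' → R T' i s s')
    (hspo : ∀ (T : ∀ i, Finset (S i)) (i : Fin n),
      (∀ s : S i, ¬ R T i s s) ∧
      (∀ s t u : S i, R T i s t → R T i t u → R T i s u)) :
    ∀ T : ∀ i, Finset (S i), (∀ i, (T i).Nonempty) →
      ∃! T' : ∀ i, Finset (S i),
        Relation.ReflTransGen (fun A B : ∀ i, Finset (S i) =>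
          A ≠ B ∧ (∀ i, B i ⊆ A i) ∧
            (∀ i, ∀ s ∈ A i, s ∉ B i → ∃ s' ∈ B i, R A i s s')) T T' ∧
        ∀ T'' : ∀ i, Finset (S i),
          ¬ (T' ≠ T'' ∧ (∀ i, T'' i ⊆ T' i) ∧
            (∀ i, ∀ s ∈ T' i, s ∉ T'' i → ∃ s' ∈ T'' i, R T' i s s')) := by
  classical
  haveI : ∀ i, DecidableEq (S i) := fun i => Classical.decEq _
  intro T _hne
  -- Existence of a normal form
  have exists_nf : ∀ m (U : ∀ i, Finset (S i)), ETM U ≤ m →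
      ∃ N, Relation.ReflTransGen (ETStep R) U N ∧ ∀ V, ¬ ETStep R N V := by
    intro m
    induction m with
    | zero =>
      intro U hm
      refine ⟨U, Relation.ReflTransGen.refl, fun V hV => ?_⟩
      have := hV.lt
      omega
    | succ m ih =>
      intro U hm
      by_cases hU : ∀ V, ¬ ETStep R U V
      · exact ⟨U, Relation.ReflTransGen.refl, hU⟩
      · push_neg at hU
        obtain ⟨V, hV⟩ := hU
        obtain ⟨N, hVN, hN⟩ := ih V (by have := hV.lt; omega)
        exact ⟨N, Relation.ReflTransGen.head hV hVN, hN⟩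
  obtain ⟨N, hTN, hN⟩ := exists_nf (ETM T) T le_rfl
  refine ⟨N, ⟨hTN, fun T'' h => hN T'' h⟩, ?_⟩
  -- Uniqueness
  rintro N' ⟨hTN', hN'⟩
  have hN'step : ∀ V, ¬ ETStep R N' V := fun V h => hN' V h
  -- show N' = N; induct along T ⇒* N'
  clear _hne
  revert hTN
  induction hTN' using Relation.ReflTransGen.head_induction_on with
  | refl =>
    intro hTN
    rcases hTN.cases_head with rfl | ⟨U, hTU, _⟩
    · rfl
    · exact absurd hTU (hN'step U)
  | @head A B hAB hBN' ih =>
    intro hAN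
    exact ih (ET_toNF hher hspo hN (ETM A) A le_rfl hAN B hAB)
end

section
/- Nice weak dominance is a strict partial order: In any finite strategic game, the nice weak dominance relation NW is irreflexive and transitive: if s''ᵢ NW s'ᵢ and s'ᵢ NW s*ᵢ then s''ᵢ NW s*ᵢ. -/
/-- Strategy `s` of player `i` is weakly dominated by `s'`. -/
def WeakDom {n : ℕ} {S : Fin n → Type*} (p : Fin n → (∀ i, S i) → ℝ)
    (i : Fin n) (s s' : S i) : Prop :=
  (∀ σ : ∀ j, S j, p i (Function.update σ i s) ≤ p i (Function.update σ i s')) ∧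
  (∃ σ : ∀ j, S j, p i (Function.update σ i s) < p i (Function.update σ i s'))

/-- Strategies `s` and `s'` of player `i` are compatible. -/
def Compatible {n : ℕ} {S : Fin n → Type*} (p : Fin n → (∀ i, S i) → ℝ)
    (i : Fin n) (s s' : S i) : Prop :=
  ∀ (σ : ∀ j, S j) (j : Fin n),
    p i (Function.update σ i s) = p i (Function.update σ i s') →
    p j (Function.update σ i s) = p j (Function.update σ i s')

/-- `s` is nicely weakly dominated by `s'`. -/
def NiceWeakDom {n : ℕ} {S : Fin n → Type*} (p : Fin n → (∀ i, S i) → ℝ)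
    (i : Fin n) (s s' : S i) : Prop :=
  WeakDom p i s s' ∧ Compatible p i s s'

/-- Nice weak dominance is a strict partial order: irreflexive and transitive. -/
theorem niceWeakDom_strict_partial_order {n : ℕ} {S : Fin n → Type*}
    [∀ i, Fintype (S i)] [∀ i, Nonempty (S i)]
    (p : Fin n → (∀ i, S i) → ℝ) (i : Fin n) :
    (∀ s : S i, ¬ NiceWeakDom p i s s) ∧
    (∀ s'' s' s : S i, NiceWeakDom p i s'' s' → NiceWeakDom p i s' s →
      NiceWeakDom p i s'' s) := by
  constructor
  · rintro s ⟨⟨_, σ, hσ⟩, _⟩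
    exact lt_irrefl _ hσ
  · rintro s'' s' s ⟨⟨h1, σ1, hσ1⟩, c1⟩ ⟨⟨h2, _⟩, c2⟩
    refine ⟨⟨fun σ => (h1 σ).trans (h2 σ), σ1, lt_of_lt_of_le hσ1 (h2 σ1)⟩, ?_⟩
    intro σ j heq
    have e1 : p i (Function.update σ i s'') = p i (Function.update σ i s') :=
      le_antisymm (h1 σ) (by linarith [h1 σ, h2 σ, heq.ge])
    have e2 : p i (Function.update σ i s') = p i (Function.update σ i s) := by
      linarith [e1, heq]
    exact (c1 σ j e1).trans (c2 σ j e2)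
end

section
/- NW ∪ PE is hereditary: Let G' be a restriction of a finite game G, and let s'ᵢ, s''ᵢ be strategies of player i present in G'. If s'ᵢ is nicely weakly dominated by s''ᵢ in G, or payoff equivalent to s''ᵢ in G, then in G' either s''ᵢ nicely weakly dominates s'ᵢ or s'ᵢ and s''ᵢ are payoff equivalent. -/
/-- Weak dominance of `s` by `s'` in the restriction with strategy sets `T`. -/
def WeakDomOn {n : ℕ} {S : Fin n → Type*} (p : Fin n → (∀ i, S i) → ℝ)
    (T : ∀ j, Set (S j)) (i : Fin n) (s s' : S i) : Prop :=
  (∀ σ : ∀ j, S j, (∀ j, σ j ∈ T j) →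
    p i (Function.update σ i s) ≤ p i (Function.update σ i s')) ∧
  (∃ σ : ∀ j, S j, (∀ j, σ j ∈ T j) ∧
    p i (Function.update σ i s) < p i (Function.update σ i s'))

/-- Compatibility of `s` and `s'` in the restriction with strategy sets `T`. -/
def CompatibleOn {n : ℕ} {S : Fin n → Type*} (p : Fin n → (∀ i, S i) → ℝ)
    (T : ∀ j, Set (S j)) (i : Fin n) (s s' : S i) : Prop :=
  ∀ (σ : ∀ j, S j), (∀ j, σ j ∈ T j) → ∀ j : Fin n,
    p i (Function.update σ i s) = p i (Function.update σ i s') →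
    p j (Function.update σ i s) = p j (Function.update σ i s')

/-- Nice weak dominance in the restriction with strategy sets `T`. -/
def NiceWeakDomOn {n : ℕ} {S : Fin n → Type*} (p : Fin n → (∀ i, S i) → ℝ)
    (T : ∀ j, Set (S j)) (i : Fin n) (s s' : S i) : Prop :=
  WeakDomOn p T i s s' ∧ CompatibleOn p T i s s'

/-- Payoff equivalence in the restriction with strategy sets `T`. -/
def PayoffEquivOn {n : ℕ} {S : Fin n → Type*} (p : Fin n → (∀ i, S i) → ℝ)
    (T : ∀ j, Set (S j)) (i : Fin n) (s s' : S i) : Prop :=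
  ∀ (σ : ∀ j, S j), (∀ j, σ j ∈ T j) → ∀ j : Fin n,
    p j (Function.update σ i s) = p j (Function.update σ i s')

/-- NW ∪ PE is hereditary: if in the full game `s'` is nicely weakly dominated by `s''`
or payoff equivalent to `s''`, then the same disjunction holds in any restriction
containing both strategies. -/
theorem niceWeakDom_union_payoffEquiv_hereditary {n : ℕ} {S : Fin n → Type*}
    [∀ i, Fintype (S i)] [∀ i, Nonempty (S i)]
    (p : Fin n → (∀ i, S i) → ℝ)
    (T : ∀ j, Set (S j)) (hT : ∀ j, (T j).Nonempty)
    (i : Fin n) (s' s'' : S i) (hs' : s' ∈ T i) (hs'' : s'' ∈ T i)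
    (h : NiceWeakDomOn p (fun j => (Set.univ : Set (S j))) i s' s'' ∨
         PayoffEquivOn p (fun j => (Set.univ : Set (S j))) i s' s'') :
    NiceWeakDomOn p T i s' s'' ∨ PayoffEquivOn p T i s' s'' := by
  rcases h with ⟨⟨hle, _⟩, hcomp⟩ | hpe
  · by_cases hstrict : ∃ σ : ∀ j, S j, (∀ j, σ j ∈ T j) ∧
        p i (Function.update σ i s') < p i (Function.update σ i s'')
    · left
      refine ⟨⟨fun σ _ => hle σ (fun j => Set.mem_univ _), hstrict⟩,
        fun σ _ j heq => hcomp σ (fun j => Set.mem_univ _) j heq⟩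
    · right
      intro σ hσ j
      push_neg at hstrict
      have heq : p i (Function.update σ i s') = p i (Function.update σ i s'') :=
        le_antisymm (hle σ (fun j => Set.mem_univ _)) (hstrict σ hσ)
      exact hcomp σ (fun j => Set.mem_univ _) j heq
  · exact Or.inr fun σ _ j => hpe σ (fun j => Set.mem_univ _) j
end

section
/- Strict mixed dominance is regular: In any finite strategic game, strict dominance by mixed strategies satisfies: (a) if s is strictly dominated by (1−α)s + αm for some α ∈ (0,1], then s is strictly dominated by m; (b) if t₁ is strictly dominated by m₁ and t₂ is strictly dominated by m₂, then t₁ is strictly dominated by m₁[t₂/m₂]. -/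
/-- `m` is a probability distribution (mixed strategy) on the finite type `α`. -/
def IsDist {α : Type*} [Fintype α] (m : α → ℝ) : Prop :=
  (∀ s, 0 ≤ m s) ∧ (∑ s, m s) = 1

/-- The convex combination `(1 - α)·s + α·m`. -/
def Mix {α : Type*} [DecidableEq α] (α' : ℝ) (s : α) (m : α → ℝ) : α → ℝ :=
  fun t => (1 - α') * (if t = s then 1 else 0) + α' * m t

/-- The mixed strategy `m₁[t₂/m₂]` obtained from `m₁` by substituting `m₂` for `t₂`:
`m₁(t₂)·m₂ + (m₁ restricted away from t₂)`. -/
def Subst {α : Type*} [DecidableEq α] (m₁ : α → ℝ) (t₂ : α) (m₂ : α → ℝ) : α → ℝ :=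
  fun s => m₁ t₂ * m₂ s + (if s = t₂ then 0 else m₁ s)

/-- Strategy `s` of player `i` is strictly dominated by the mixed strategy `m`. -/
def StrictMixedDom {n : ℕ} {S : Fin n → Type*} [∀ i, Fintype (S i)]
    (p : Fin n → (∀ i, S i) → ℝ) (i : Fin n) (s : S i) (m : S i → ℝ) : Prop :=
  ∀ σ : ∀ j, S j,
    p i (Function.update σ i s) < ∑ t : S i, m t * p i (Function.update σ i t)

/-- Strict dominance by mixed strategies is regular. -/
theorem strictMixedDom_regular {n : ℕ} {S : Fin n → Type*}
    [∀ i, Fintype (S i)] [∀ i, DecidableEq (S i)]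
    (p : Fin n → (∀ i, S i) → ℝ) (i : Fin n) :
    (∀ (s : S i) (m : S i → ℝ) (α : ℝ), 0 < α → α ≤ 1 → IsDist m →
      StrictMixedDom p i s (Mix α s m) → StrictMixedDom p i s m) ∧
    (∀ (t₁ : S i) (m₁ : S i → ℝ) (t₂ : S i) (m₂ : S i → ℝ),
      IsDist m₁ → IsDist m₂ →
      StrictMixedDom p i t₁ m₁ → StrictMixedDom p i t₂ m₂ →
      StrictMixedDom p i t₁ (Subst m₁ t₂ m₂)) := by
  constructor
  · intro s m α hα hα1 hm h σ
    have h1 := h σ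
    set f : S i → ℝ := fun t => p i (Function.update σ i t) with hf
    have hsum : ∑ t : S i, Mix α s m t * f t
        = (1 - α) * (∑ t : S i, if t = s then f t else 0) + α * ∑ t : S i, m t * f t := by
      rw [Finset.mul_sum, Finset.mul_sum, ← Finset.sum_add_distrib]
      apply Finset.sum_congr rfl
      intro x _
      by_cases hx : x = s <;> simp [Mix, hx] <;> ring
    have e1 : (∑ t : S i, if t = s then f t else 0) = f s := by simp
    rw [e1] at hsum
    rw [hsum] at h1
    nlinarith [h1]
  · intro t₁ m₁ t₂ m₂ hm₁ hm₂ h₁ h₂ σ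
    have h1 := h₁ σ
    have h2 := h₂ σ
    set f : S i → ℝ := fun t => p i (Function.update σ i t) with hf
    have hsum : ∑ t : S i, Subst m₁ t₂ m₂ t * f t
        = m₁ t₂ * (∑ t : S i, m₂ t * f t)
          + ((∑ t : S i, m₁ t * f t) - ∑ t : S i, if t = t₂ then m₁ t * f t else 0) := by
      rw [Finset.mul_sum, ← Finset.sum_sub_distrib, ← Finset.sum_add_distrib]
      apply Finset.sum_congr rfl
      intro x _
      by_cases hx : x = t₂ <;> simp [Subst, hx] <;> ring
    have e2 : (∑ t : S i, if t = t₂ then m₁ t * f t else 0) = m₁ t₂ * f t₂ := by simp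
    rw [e2] at hsum
    rw [hsum]
    have h3 := mul_nonneg (hm₁.1 t₂) (sub_nonneg.mpr h2.le)
    nlinarith [h3, h1]
end
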